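/- The 6-dimensional real Lie algebras aff(ℝ) ⊕ aff(ℝ) ⊕ aff(ℝ) and g₄² ⊕ aff(ℝ) are not isomorphic, but their complexifications are isomorphic as complex Lie algebras. -/

import Mathlib

open Module
open scoped TensorProduct

/-- Structure constants of `g₄²` (for basis indices `i < j`). -/
def c42 (i j : Fin 4) : Fin 4 → ℝ :=
  if (i, j) = (0, 2) then ![0, 1, 0, 0]
  else if (i, j) = (1, 2) then ![-1, 0, 0, 0]
  else if (i, j) = (0, 3) then ![-1, 0, 0, 0]
  else if (i, j) = (1, 3) then ![0, -1, 0, 0]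
  else 0
theorem aff3_aux {A M : Type} [LieRing A] [LieAlgebra ℂ A] [LieRing M] [LieAlgebra ℂ M]
    (bA : Basis (Fin 3 × Bool) ℂ A) (bB : Basis (Fin 4 ⊕ Bool) ℂ M)
    (aTU : ∀ c : Fin 3, ⁅bA (c, false), bA (c, true)⁆ = bA (c, true))
    (aX : ∀ (c c' : Fin 3) (x y : Bool), c ≠ c' → ⁅bA (c, x), bA (c', y)⁆ = 0)
    (e01 : ⁅bB (Sum.inl 0), bB (Sum.inl 1)⁆ = 0)
    (e02 : ⁅bB (Sum.inl 0), bB (Sum.inl 2)⁆ = bB (Sum.inl 1))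
    (e12 : ⁅bB (Sum.inl 1), bB (Sum.inl 2)⁆ = -bB (Sum.inl 0))
    (e03 : ⁅bB (Sum.inl 0), bB (Sum.inl 3)⁆ = -bB (Sum.inl 0))
    (e13 : ⁅bB (Sum.inl 1), bB (Sum.inl 3)⁆ = -bB (Sum.inl 1))
    (e23 : ⁅bB (Sum.inl 2), bB (Sum.inl 3)⁆ = 0)
    (er : ∀ (i : Fin 4) (x : Bool), ⁅bB (Sum.inl i), bB (Sum.inr x)⁆ = 0)
    (eft : ⁅bB (Sum.inr false), bB (Sum.inr true)⁆ = bB (Sum.inr true)) :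
    Nonempty (A ≃ₗ⁅ℂ⁆ M) := by
  have aUT : ∀ c : Fin 3, ⁅bA (c, true), bA (c, false)⁆ = -bA (c, true) := by
    intro c; rw [← lie_skew, aTU]
  have e20 : ⁅bB (Sum.inl 2), bB (Sum.inl 0)⁆ = -bB (Sum.inl 1) := by rw [← lie_skew, e02]
  have e21 : ⁅bB (Sum.inl 2), bB (Sum.inl 1)⁆ = bB (Sum.inl 0) := by rw [← lie_skew, e12, neg_neg]
  have e30 : ⁅bB (Sum.inl 3), bB (Sum.inl 0)⁆ = bB (Sum.inl 0) := by rw [← lie_skew, e03, neg_neg]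
  have e31 : ⁅bB (Sum.inl 3), bB (Sum.inl 1)⁆ = bB (Sum.inl 1) := by rw [← lie_skew, e13, neg_neg]
  have e32 : ⁅bB (Sum.inl 3), bB (Sum.inl 2)⁆ = 0 := by rw [← lie_skew, e23, neg_zero]
  have e10 : ⁅bB (Sum.inl 1), bB (Sum.inl 0)⁆ = 0 := by rw [← lie_skew, e01, neg_zero]
  have er' : ∀ (i : Fin 4) (x : Bool), ⁅bB (Sum.inr x), bB (Sum.inl i)⁆ = 0 := by
    intro i x; rw [← lie_skew, er, neg_zero]
  have etf : ⁅bB (Sum.inr true), bB (Sum.inr false)⁆ = -bB (Sum.inr true) := by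
    rw [← lie_skew, eft]
  let gv : Fin 3 × Bool → M := fun p =>
    bif p.2 then
      ![bB (Sum.inl 0) + Complex.I • bB (Sum.inl 1),
        bB (Sum.inl 0) - Complex.I • bB (Sum.inl 1),
        bB (Sum.inr true)] p.1
    else
      ![(1/2 : ℂ) • bB (Sum.inl 3) - (Complex.I/2) • bB (Sum.inl 2),
        (1/2 : ℂ) • bB (Sum.inl 3) + (Complex.I/2) • bB (Sum.inl 2),
        bB (Sum.inr false)] p.1
  let hv : Fin 4 ⊕ Bool → A := fun k =>
    Sum.elim
      ![(1/2 : ℂ) • bA (0, true) + (1/2 : ℂ) • bA (1, true),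
        -(Complex.I/2) • bA (0, true) + (Complex.I/2) • bA (1, true),
        Complex.I • bA (0, false) - Complex.I • bA (1, false),
        bA (0, false) + bA (1, false)]
      (fun b => bA (2, b)) k
  let F : A →ₗ[ℂ] M := bA.constr ℂ gv
  let G : M →ₗ[ℂ] A := bB.constr ℂ hv
  have hFb : ∀ i, F (bA i) = gv i := fun i => bA.constr_basis ℂ gv i
  have hGb : ∀ k, G (bB k) = hv k := fun k => bB.constr_basis ℂ hv k
  have fin3 : ∀ x : Fin 3, x = 0 ∨ x = 1 ∨ x = 2 := by decide
  have fin4 : ∀ x : Fin 4, x = 0 ∨ x = 1 ∨ x = 2 ∨ x = 3 := by decide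
  have hGF : G.comp F = LinearMap.id := by
    apply bA.ext
    rintro ⟨c, b⟩
    rcases fin3 c with rfl | rfl | rfl <;> cases b <;>
      norm_num [Matrix.cons_val_two, Matrix.tail_cons, Matrix.head_cons, Matrix.cons_val_three, hFb, hGb, gv, hv, map_add, map_sub, map_smul, smul_add, smul_sub, smul_smul] <;>
      match_scalars <;> norm_num [Complex.ext_iff]
  have hFG : F.comp G = LinearMap.id := by
    apply bB.ext
    rintro (i | b)
    · rcases fin4 i with rfl | rfl | rfl | rfl <;>
        norm_num [Matrix.cons_val_two, Matrix.tail_cons, Matrix.head_cons, Matrix.cons_val_three, hFb, hGb, gv, hv, map_add, map_sub, map_smul, smul_add, smul_sub, smul_smul] <;>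
        match_scalars <;> norm_num [Complex.ext_iff]
    · cases b <;> norm_num [Matrix.cons_val_two, Matrix.tail_cons, Matrix.head_cons, Matrix.cons_val_three, hFb, hGb, gv, hv]
  have aX01 : ∀ x y : Bool, ⁅bA (0, x), bA (1, y)⁆ = 0 := fun x y => aX 0 1 x y (by decide)
  have aX02 : ∀ x y : Bool, ⁅bA (0, x), bA (2, y)⁆ = 0 := fun x y => aX 0 2 x y (by decide)
  have aX12 : ∀ x y : Bool, ⁅bA (1, x), bA (2, y)⁆ = 0 := fun x y => aX 1 2 x y (by decide)
  have aX10 : ∀ x y : Bool, ⁅bA (1, x), bA (0, y)⁆ = 0 := fun x y => aX 1 0 x y (by decide)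
  have aX20 : ∀ x y : Bool, ⁅bA (2, x), bA (0, y)⁆ = 0 := fun x y => aX 2 0 x y (by decide)
  have aX21 : ∀ x y : Bool, ⁅bA (2, x), bA (1, y)⁆ = 0 := fun x y => aX 2 1 x y (by decide)
  have key : ∀ i j, F ⁅bA i, bA j⁆ = ⁅F (bA i), F (bA j)⁆ := by
    rintro ⟨c, b⟩ ⟨c', b'⟩
    rcases fin3 c with rfl | rfl | rfl <;> rcases fin3 c' with rfl | rfl | rfl <;>
      cases b <;> cases b' <;>
      norm_num [Matrix.cons_val_two, Matrix.tail_cons, Matrix.head_cons, Matrix.cons_val_three, hFb, gv, aTU, aUT, aX01, aX02, aX12, aX10, aX20, aX21, lie_self, lie_add, add_lie, lie_sub, sub_lie,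
        smul_lie, lie_smul, lie_zero, zero_lie, lie_neg, neg_lie,
        e01, e02, e12, e03, e13, e23, er, eft, e20, e21, e30, e31, e32, e10, er', etf,
        map_add, map_sub, map_smul, map_neg, smul_add, smul_sub, smul_smul, smul_neg] <;>
      match_scalars <;> norm_num [Complex.ext_iff]
  have main : ∀ x y : A, F ⁅x, y⁆ = ⁅F x, F y⁆ := by
    let B1 : A →ₗ[ℂ] A →ₗ[ℂ] M := LinearMap.mk₂ ℂ (fun x y => F ⁅x, y⁆)
      (fun x x' y => by simp [add_lie]) (fun t x y => by simp [smul_lie])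
      (fun x y y' => by simp [lie_add]) (fun t x y => by simp [lie_smul])
    let B2 : A →ₗ[ℂ] A →ₗ[ℂ] M := LinearMap.mk₂ ℂ (fun x y => ⁅F x, F y⁆)
      (fun x x' y => by simp [add_lie]) (fun t x y => by simp [smul_lie])
      (fun x y y' => by simp [lie_add]) (fun t x y => by simp [lie_smul])
    have hB : B1 = B2 := by
      apply bA.ext; intro i; apply bA.ext; intro j
      exact key i j
    intro x y
    exact LinearMap.congr_fun (LinearMap.congr_fun hB x) y
  exact ⟨{ toFun := F, map_add' := map_add F, map_smul' := map_smul F,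
           map_lie' := fun {x y} => main x y, invFun := G,
           left_inv := fun x => by simpa using LinearMap.congr_fun hGF x,
           right_inv := fun x => by simpa using LinearMap.congr_fun hFG x }⟩

/-- `aff(ℝ) ⊕ aff(ℝ) ⊕ aff(ℝ)` (basis indexed by `Fin 3 × Bool`, each copy having basis
`T = (c, false)`, `U = (c, true)` with `⁅T, U⁆ = U`) versus `g₄² ⊕ aff(ℝ)` (basis indexed by
`Fin 4 ⊕ Bool`). -/
theorem aff3_vs_g42_aff
    {a : Type} [LieRing a] [LieAlgebra ℝ a] (ba : Basis (Fin 3 × Bool) ℝ a)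
    (ha1 : ∀ c : Fin 3, ⁅ba (c, false), ba (c, true)⁆ = ba (c, true))
    (ha2 : ∀ (c c' : Fin 3) (x y : Bool), c ≠ c' → ⁅ba (c, x), ba (c', y)⁆ = 0)
    {m : Type} [LieRing m] [LieAlgebra ℝ m] (bm : Basis (Fin 4 ⊕ Bool) ℝ m)
    (hm1 : ∀ i j : Fin 4, i < j →
      ⁅bm (Sum.inl i), bm (Sum.inl j)⁆ = ∑ k, c42 i j k • bm (Sum.inl k))
    (hm2 : ⁅bm (Sum.inr false), bm (Sum.inr true)⁆ = bm (Sum.inr true))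
    (hm3 : ∀ (i : Fin 4) (x : Bool), ⁅bm (Sum.inl i), bm (Sum.inr x)⁆ = 0) :
    IsEmpty (a ≃ₗ⁅ℝ⁆ m) ∧ Nonempty ((ℂ ⊗[ℝ] a) ≃ₗ⁅ℂ⁆ (ℂ ⊗[ℝ] m)) := by
  have hb01 : ⁅bm (Sum.inl 0), bm (Sum.inl 1)⁆ = 0 := by
    have := hm1 0 1 (by decide); simpa [c42, Fin.sum_univ_four] using this
  have hb02 : ⁅bm (Sum.inl 0), bm (Sum.inl 2)⁆ = bm (Sum.inl 1) := by
    have := hm1 0 2 (by decide); simpa [c42, Fin.sum_univ_four] using this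
  have hb12 : ⁅bm (Sum.inl 1), bm (Sum.inl 2)⁆ = -bm (Sum.inl 0) := by
    have := hm1 1 2 (by decide); simpa [c42, Fin.sum_univ_four] using this
  have hb03 : ⁅bm (Sum.inl 0), bm (Sum.inl 3)⁆ = -bm (Sum.inl 0) := by
    have := hm1 0 3 (by decide); simpa [c42, Fin.sum_univ_four] using this
  have hb13 : ⁅bm (Sum.inl 1), bm (Sum.inl 3)⁆ = -bm (Sum.inl 1) := by
    have := hm1 1 3 (by decide); simpa [c42, Fin.sum_univ_four] using this
  have hb23 : ⁅bm (Sum.inl 2), bm (Sum.inl 3)⁆ = 0 := by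
    have := hm1 2 3 (by decide); simpa [c42, Fin.sum_univ_four] using this
  constructor
  ·
    have tr : ∀ {M : Type} [AddCommGroup M] [Module ℝ M], ∀ {ι : Type} [Fintype ι] [DecidableEq ι],
        ∀ (b : Basis ι ℝ M) (f : M →ₗ[ℝ] M), LinearMap.trace ℝ M f = ∑ i, b.repr (f (b i)) i := by
      intro M _ _ ι _ _ b f
      rw [LinearMap.trace_eq_matrix_trace ℝ b]
      simp [Matrix.trace, LinearMap.toMatrix_apply, Matrix.diag]
    -- bracket lemmas in m
    have hb02 : ⁅bm (Sum.inl 0), bm (Sum.inl 2)⁆ = bm (Sum.inl 1) := by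
      have := hm1 0 2 (by decide)
      simpa [c42, Fin.sum_univ_four] using this
    have hb12 : ⁅bm (Sum.inl 1), bm (Sum.inl 2)⁆ = -bm (Sum.inl 0) := by
      have := hm1 1 2 (by decide)
      simpa [c42, Fin.sum_univ_four] using this
    have hb23 : ⁅bm (Sum.inl 2), bm (Sum.inl 3)⁆ = 0 := by
      have := hm1 2 3 (by decide)
      simpa [c42, Fin.sum_univ_four] using this
    -- ad X₃ facts
    have h30 : ⁅bm (Sum.inl 2), bm (Sum.inl 0)⁆ = -bm (Sum.inl 1) := by
      rw [← lie_skew, hb02]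
    have h31 : ⁅bm (Sum.inl 2), bm (Sum.inl 1)⁆ = bm (Sum.inl 0) := by
      rw [← lie_skew, hb12, neg_neg]
    have κm : killingForm ℝ m (bm (Sum.inl 2)) (bm (Sum.inl 2)) = -2 := by
      rw [killingForm_apply_apply, tr bm]
      rw [Fintype.sum_sum_type]
      simp [Fin.sum_univ_four, LieAlgebra.ad_apply, h30, h31, hb23, hm3, lie_neg,
        Finsupp.single_apply]
      norm_num
    -- positivity on a
    have sum_lie' : ∀ (f : Fin 3 × Bool → a) (y : a),
        ⁅∑ i, f i, y⁆ = ∑ i, ⁅f i, y⁆ := by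
      intro f y
      exact sum_lie _ _ _
    have κa : ∀ x : a, 0 ≤ killingForm ℝ a x x := by
      intro x
      have hxT : ∀ c : Fin 3, ⁅x, ba (c, false)⁆ = -(ba.repr x (c, true)) • ba (c, true) := by
        intro c
        conv_lhs => rw [← ba.sum_repr x]
        rw [sum_lie']
        rw [Finset.sum_eq_single ((c, true) : Fin 3 × Bool)]
        · rw [smul_lie, ← lie_skew, ha1, smul_neg, ← neg_smul]
        · rintro ⟨c', b'⟩ - hne
          by_cases hc : c' = c
          · subst hc
            have hb : b' = false := by
              cases b' with
              | false => rfl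
              | true => exact absurd rfl hne
            subst hb
            rw [smul_lie, lie_self, smul_zero]
          · rw [smul_lie, ha2 c' c b' false hc, smul_zero]
        · intro h; exact absurd (Finset.mem_univ _) h
      have hxU : ∀ c : Fin 3, ⁅x, ba (c, true)⁆ = ba.repr x (c, false) • ba (c, true) := by
        intro c
        conv_lhs => rw [← ba.sum_repr x]
        rw [sum_lie']
        rw [Finset.sum_eq_single ((c, false) : Fin 3 × Bool)]
        · rw [smul_lie, ha1]
        · rintro ⟨c', b'⟩ - hne
          by_cases hc : c' = c
          · subst hc
            have hb : b' = true := by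
              cases b' with
              | false => exact absurd rfl hne
              | true => rfl
            subst hb
            rw [smul_lie, lie_self, smul_zero]
          · rw [smul_lie, ha2 c' c b' true hc, smul_zero]
        · intro h; exact absurd (Finset.mem_univ _) h
      rw [killingForm_apply_apply, tr ba]
      rw [Fintype.sum_prod_type]
      have : ∀ c : Fin 3, ∑ b : Bool,
          (ba.repr ((LieAlgebra.ad ℝ a x ∘ₗ LieAlgebra.ad ℝ a x) (ba (c, b)))) (c, b)
          = ba.repr x (c, false) ^ 2 := by
        intro c
        rw [Fintype.sum_bool]
        simp only [LinearMap.comp_apply, LieAlgebra.ad_apply, hxT, hxU, lie_smul, lie_neg,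
          neg_smul, map_smul, map_neg, Finsupp.coe_smul, Finsupp.coe_neg, Pi.smul_apply,
          Pi.neg_apply, ba.repr_self, Finsupp.single_apply]
        simp [sq]
      rw [Finset.sum_congr rfl fun c _ => this c]
      positivity
    refine ⟨fun e => ?_⟩
    have := LieAlgebra.killingForm_of_equiv_apply e.symm (bm (Sum.inl 2)) (bm (Sum.inl 2))
    rw [κm] at this
    have h2 := κa (e.symm (bm (Sum.inl 2)))
    rw [this] at h2
    norm_num at h2
  · have lieB : ∀ k l : Fin 4 ⊕ Bool,
        ⁅Algebra.TensorProduct.basis ℂ bm k, Algebra.TensorProduct.basis ℂ bm l⁆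
          = 1 ⊗ₜ[ℝ] ⁅bm k, bm l⁆ := by
      intro k l
      rw [Algebra.TensorProduct.basis_apply, Algebra.TensorProduct.basis_apply,
        LieAlgebra.ExtendScalars.bracket_tmul, one_mul]
    have lieA : ∀ i j : Fin 3 × Bool,
        ⁅Algebra.TensorProduct.basis ℂ ba i, Algebra.TensorProduct.basis ℂ ba j⁆
          = 1 ⊗ₜ[ℝ] ⁅ba i, ba j⁆ := by
      intro i j
      rw [Algebra.TensorProduct.basis_apply, Algebra.TensorProduct.basis_apply,
        LieAlgebra.ExtendScalars.bracket_tmul, one_mul]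
    apply aff3_aux (Algebra.TensorProduct.basis ℂ ba) (Algebra.TensorProduct.basis ℂ bm)
    · intro c; rw [lieA, ha1, Algebra.TensorProduct.basis_apply]
    · intro c c' x y h; rw [lieA, ha2 _ _ _ _ h, TensorProduct.tmul_zero]
    · rw [lieB, hb01, TensorProduct.tmul_zero]
    · rw [lieB, hb02, Algebra.TensorProduct.basis_apply]
    · rw [lieB, hb12, TensorProduct.tmul_neg, Algebra.TensorProduct.basis_apply]
    · rw [lieB, hb03, TensorProduct.tmul_neg, Algebra.TensorProduct.basis_apply]
    · rw [lieB, hb13, TensorProduct.tmul_neg, Algebra.TensorProduct.basis_apply]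
    · rw [lieB, hb23, TensorProduct.tmul_zero]
    · intro i x; rw [lieB, hm3, TensorProduct.tmul_zero]
    · rw [lieB, hm2, Algebra.TensorProduct.basis_apply]
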